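/- Let X = {0,1}^ℕ be the Cantor space with the product topology (each factor {0,1} discrete), and define ζ : X → ℝ by ζ(x) = ∑_{n=1}^∞ 2^{−n} x_n. Then ζ is continuous, and ζ is not locally constant: for every x ∈ X and every neighbourhood U of x, ζ is not constant on U. Consequently ζ ∈ C_c(X, ℝ) does not lie in the image of the canonical comparison map Φ_X : C_c(X, ℤ) ⊗_ℤ ℝ → C_c(X, ℝ), so Φ_X is not surjective. (Example 3.2.5.) -/

import Mathlib

open scoped CompactlySupported
open Set Function

variable (X A : Type*) [TopologicalSpace X]
  [AddCommGroup A] [TopologicalSpace A] [IsTopologicalAddGroup A]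

/-- The bilinear map `(f, a) ↦ (x ↦ f x • a)` from `C_c(X, ℤ) × A` to `C_c(X, A)`. -/
noncomputable def ccSmulBilin :
    C_c(X, ℤ) →ₗ[ℤ] A →ₗ[ℤ] C_c(X, A) where
  toFun f :=
    { toFun := fun a =>
        { toFun := fun x => f x • a
          continuous_toFun := by
            exact (continuous_of_discreteTopology (f := fun n : ℤ => n • a)).comp f.continuous
          hasCompactSupport' := by
            have h := f.hasCompactSupport.comp_left (g := fun n : ℤ => n • a) (zero_smul ℤ a)
            exact h
      }
      map_add' := fun a b => by
        ext x
        exact smul_add (f x) a b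
      map_smul' := fun z a => by
        ext x
        exact smul_comm (f x) z a }
  map_add' f g := by
    ext a x
    exact add_smul (f x) (g x) a
  map_smul' z f := by
    ext a x
    exact mul_smul z (f x) a

/-- The canonical comparison map `Φ_X : C_c(X, ℤ) ⊗_ℤ A → C_c(X, A)`, the unique additive
map with `Φ_X (f ⊗ a) x = f x • a`. -/
noncomputable def ccComparison :
    TensorProduct ℤ C_c(X, ℤ) A →ₗ[ℤ] C_c(X, A) :=
  TensorProduct.lift (ccSmulBilin X A)

/-- The function `ζ : {0,1}^ℕ → ℝ`, `ζ x = ∑_{n ≥ 1} 2^{-n} x_n` (here indexed so that the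
`n`-th coordinate, `n : ℕ`, contributes `2^{-(n+1)}`). -/
noncomputable def cantorZeta : (ℕ → Bool) → ℝ :=
  fun x => ∑' n : ℕ, (2 : ℝ)⁻¹ ^ (n + 1) * (if x n then 1 else 0)

/-!
Every element of the image of `Φ_X` is locally constant: a pure tensor maps to `x ↦ f x • a`
with `f` continuous into the discrete group `ℤ`, and sums of locally constant functions are
locally constant. But `ζ` is nowhere locally constant: flipping the `n`-th digit of `x`
changes `ζ x` by `2^{-(n+1)} ≠ 0`, and these flips converge to `x` as `n → ∞`.
-/

open Filter Topology

theorem isLocallyConstant_ccComparison (z : TensorProduct ℤ C_c(X, ℤ) A) :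
    IsLocallyConstant (ccComparison X A z) := by
  induction z using TensorProduct.induction_on with
  | zero => simpa using IsLocallyConstant.const (0 : A)
  | tmul f a => exact ((IsLocallyConstant.iff_continuous f).mpr f.continuous).comp (· • a)
  | add u v hu hv => simpa only [map_add, CompactlySupportedContinuousMap.coe_add] using hu.add hv

theorem ccComparison_apply_ne_of_not_eventually_eq {f : X → A} {x : X}
    (hf : ¬ ∀ᶠ y in 𝓝 x, f y = f x) (z : TensorProduct ℤ C_c(X, ℤ) A) :
    ⇑(ccComparison X A z) ≠ f := by
  rintro rfl
  exact hf ((isLocallyConstant_ccComparison X A z).eventually_eq x)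

theorem tendsto_update_cofinite {ι : Type*} {β : ι → Type*} [DecidableEq ι]
    [∀ i, TopologicalSpace (β i)] (x v : ∀ i, β i) :
    Tendsto (fun i => update x i (v i)) cofinite (𝓝 x) := by
  refine tendsto_pi_nhds.mpr fun j => tendsto_const_nhds.congr' ?_
  filter_upwards [eventually_cofinite_ne j] with i hi
  exact (update_of_ne hi.symm (v i) x).symm

theorem summable_two_inv_pow_succ : Summable fun n : ℕ => (2 : ℝ)⁻¹ ^ (n + 1) :=
  (summable_nat_add_iff 1).mpr (summable_geometric_of_lt_one (by norm_num) (by norm_num))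

theorem norm_cantorZeta_summand_le (n : ℕ) (b : Bool) :
    ‖(2 : ℝ)⁻¹ ^ (n + 1) * (if b then 1 else 0)‖ ≤ (2 : ℝ)⁻¹ ^ (n + 1) := by
  cases b <;> simp

theorem continuous_cantorZeta : Continuous cantorZeta :=
  continuous_tsum (fun n => (continuous_of_discreteTopology
      (f := fun b : Bool => (2 : ℝ)⁻¹ ^ (n + 1) * if b then 1 else 0)).comp (continuous_apply n))
    summable_two_inv_pow_succ fun n x => norm_cantorZeta_summand_le n (x n)

theorem cantorZeta_eq_add_tsum_ite (x : ℕ → Bool) (n : ℕ) :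
    cantorZeta x = (2 : ℝ)⁻¹ ^ (n + 1) * (if x n then 1 else 0) +
      ∑' k, if k = n then 0 else (2 : ℝ)⁻¹ ^ (k + 1) * (if x k then 1 else 0) :=
  (summable_two_inv_pow_succ.of_norm_bounded fun k =>
    norm_cantorZeta_summand_le k (x k)).tsum_eq_add_tsum_ite n

theorem cantorZeta_update_not_ne (x : ℕ → Bool) (n : ℕ) :
    cantorZeta (update x n (!x n)) ≠ cantorZeta x := by
  have hrest : (∑' k, if k = n then 0 else
        (2 : ℝ)⁻¹ ^ (k + 1) * (if update x n (!x n) k then 1 else 0)) =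
      ∑' k, if k = n then 0 else (2 : ℝ)⁻¹ ^ (k + 1) * (if x k then 1 else 0) :=
    tsum_congr fun k => by split_ifs with hk <;> simp_all [update_of_ne]
  rw [cantorZeta_eq_add_tsum_ite _ n, cantorZeta_eq_add_tsum_ite x n, hrest, update_self]
  cases x n <;> simp

theorem cantorZeta_not_eventually_eq (x : ℕ → Bool) :
    ¬ ∀ᶠ y in 𝓝 x, cantorZeta y = cantorZeta x := fun h =>
  let ⟨n, hn⟩ := ((tendsto_update_cofinite x fun n => !x n).eventually h).exists
  cantorZeta_update_not_ne x n hn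

/-- **Example 3.2.5.** On the Cantor space `X = {0,1}^ℕ`, the function
`ζ x = ∑_n 2^{-(n+1)} x_n` is continuous but not locally constant; consequently it does
not lie in the image of the canonical comparison map `Φ_X : C_c(X, ℤ) ⊗_ℤ ℝ → C_c(X, ℝ)`,
and `Φ_X` is not surjective. -/
theorem cantorZeta_not_in_range :
    Continuous cantorZeta ∧
    (∀ x : ℕ → Bool, ∀ U ∈ nhds x, ¬ (∀ y ∈ U, cantorZeta y = cantorZeta x)) ∧
    (∀ g : C_c((ℕ → Bool), ℝ), ⇑g = cantorZeta →
      ∀ z : TensorProduct ℤ C_c((ℕ → Bool), ℤ) ℝ, ccComparison (ℕ → Bool) ℝ z ≠ g) ∧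
    ¬ Function.Surjective (ccComparison (ℕ → Bool) ℝ) := by
  have not_in_range : ∀ g : C_c((ℕ → Bool), ℝ), ⇑g = cantorZeta →
      ∀ z : TensorProduct ℤ C_c((ℕ → Bool), ℤ) ℝ, ccComparison (ℕ → Bool) ℝ z ≠ g := by
    rintro g hg z rfl
    exact ccComparison_apply_ne_of_not_eventually_eq _ _
      (cantorZeta_not_eventually_eq fun _ => false) z hg
  refine ⟨continuous_cantorZeta,
    fun x U hU hconst => cantorZeta_not_eventually_eq x (mem_of_superset hU hconst),
    not_in_range, fun hsurj => ?_⟩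
  obtain ⟨z, hz⟩ := hsurj ⟨⟨cantorZeta, continuous_cantorZeta⟩, .of_compactSpace _⟩
  exact not_in_range _ rfl z hz
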